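/- Goals-to-tests conversion for Angel: For every hybrid game α and all sets of states X, Y ⊆ S, Angel's semi-competitive winning region can be expressed by converting the goals into tests appended in both orders: ς_α(X, Y) = ς_{α ; ?X ; (?Y)^d}(S, S) ∩ ς_{α ; (?Y)^d ; ?X}(S, S), where on the right-hand side both players' goals are the trivial goal S. -/
import Mathlib


open Set

/-- Hybrid games over a variable set `V`. Terms/ODE right-hand sides are
interpreted as functions from states `V → ℝ` to `ℝ`; tests and evolution
domain constraints are sets of states. -/
inductive Game (V : Type*) where
  | assign (x : V) (e : (V → ℝ) → ℝ)
  | ode (x : V) (f : (V → ℝ) → ℝ) (Q : Set (V → ℝ))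
  | test (Q : Set (V → ℝ))
  | choice (a b : Game V)
  | seq (a b : Game V)
  | dual (a : Game V)
  | star (a : Game V)

variable {V : Type*} [DecidableEq V]

/-- `φ : ℝ → (V → ℝ)` (restricted to `[0,r]`) is a solution of `x' = f(x) & Q`
of duration `r ≥ 0`: `t ↦ φ t x` is differentiable with derivative `f (φ s)`
at each `s ∈ [0,r]`, `φ s ∈ Q` on `[0,r]`, and all other variables stay
constant along `φ`. -/
def IsSolution (x : V) (f : (V → ℝ) → ℝ) (Q : Set (V → ℝ)) (r : ℝ)
    (φ : ℝ → (V → ℝ)) : Prop :=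
  0 ≤ r ∧
  (∀ s ∈ Set.Icc 0 r, HasDerivAt (fun t => φ t x) (f (φ s)) s) ∧
  (∀ s ∈ Set.Icc 0 r, φ s ∈ Q) ∧
  (∀ s ∈ Set.Icc 0 r, ∀ y, y ≠ x → φ s y = φ 0 y)

mutual
/-- Angel's semi-competitive winning region ς_α(X,Y). -/
def angel : Game V → Set (V → ℝ) → Set (V → ℝ) → Set (V → ℝ)
  | .assign x e, X, _ => {ω | Function.update ω x (e ω) ∈ X}
  | .ode x f Q, X, _ =>
      {ω | ∃ r φ, IsSolution x f Q r φ ∧ φ 0 = ω ∧ φ r ∈ X}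
  | .test Q, X, _ => Q ∩ X
  | .choice a b, X, Y => angel a X Y ∪ angel b X Y
  | .seq a b, X, Y => angel a (angel b X Y) (demon b X Y)
  | .dual a, X, Y => demon a Y X
  | .star a, X, Y =>
      ⋂₀ {Z | X ∪ angel a Z Zᶜ ⊆ Z} ∪
      ⋂₀ {Z | (X ∩ Y) ∪ (angel a Z Z ∩ demon a Z Z) ⊆ Z}

/-- Demon's semi-competitive winning region δ_α(X,Y). -/
def demon : Game V → Set (V → ℝ) → Set (V → ℝ) → Set (V → ℝ)
  | .assign x e, _, Y => {ω | Function.update ω x (e ω) ∈ Y}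
  | .ode x f Q, X, Y =>
      {ω | ∀ r φ, IsSolution x f Q r φ → φ 0 = ω → ∀ s ∈ Set.Icc 0 r, φ s ∈ Y} ∪
      {ω | ∃ r φ, IsSolution x f Q r φ ∧ φ 0 = ω ∧ ∃ s ∈ Set.Icc 0 r, φ s ∈ X ∩ Y}
  | .test Q, _, Y => Qᶜ ∪ Y
  | .choice a b, X, Y =>
      (demon a X Y ∩ demon b X Y) ∪ (demon a X Y ∩ angel a X Y) ∪
      (demon b X Y ∩ angel b X Y)
  | .seq a b, X, Y => demon a (angel b X Y) (demon b X Y)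
  | .dual a, X, Y => angel a Y X
  | .star a, X, Y =>
      ⋃₀ {Z | Z ⊆ Y ∩ demon a Zᶜ Z} ∪
      ⋂₀ {Z | (X ∩ Y) ∪ (angel a Z Z ∩ demon a Z Z) ⊆ Z}
end

/-- Angel's one-argument zero-sum dGL winning region ς_α(X). -/
def dglAngel : Game V → Set (V → ℝ) → Set (V → ℝ)
  | .assign x e, X => {ω | Function.update ω x (e ω) ∈ X}
  | .ode x f Q, X => {ω | ∃ r φ, IsSolution x f Q r φ ∧ φ 0 = ω ∧ φ r ∈ X}
  | .test Q, X => Q ∩ X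
  | .choice a b, X => dglAngel a X ∪ dglAngel b X
  | .seq a b, X => dglAngel a (dglAngel b X)
  | .dual a, X => (dglAngel a Xᶜ)ᶜ
  | .star a, X => ⋂₀ {Z | X ∪ dglAngel a Z ⊆ Z}

/-- Demon's one-argument zero-sum dGL winning region δ_α(X) = (ς_α(Xᶜ))ᶜ. -/
def dglDemon (g : Game V) (X : Set (V → ℝ)) : Set (V → ℝ) :=
  (dglAngel g Xᶜ)ᶜ

/-- Systematization α^{-d}: removes all dual operators. -/
def Game.sys : Game V → Game V
  | .assign x e => .assign x e
  | .ode x f Q => .ode x f Q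
  | .test Q => .test Q
  | .choice a b => .choice a.sys b.sys
  | .seq a b => .seq a.sys b.sys
  | .dual a => a.sys
  | .star a => .star a.sys

theorem mono (g : Game V) :
    (∀ X X' Y Y' : Set (V → ℝ), X ⊆ X' → Y ⊆ Y' → angel g X Y ⊆ angel g X' Y') ∧
    (∀ X X' Y Y' : Set (V → ℝ), X ⊆ X' → Y ⊆ Y' → demon g X Y ⊆ demon g X' Y') := by
  induction g with
  | assign x e =>
    refine ⟨fun X X' Y Y' hX hY ω hω => hX hω, fun X X' Y Y' hX hY ω hω => hY hω⟩
  | ode x f Q =>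
    constructor
    · rintro X X' Y Y' hX hY ω ⟨r, φ, hsol, h0, hr⟩
      exact ⟨r, φ, hsol, h0, hX hr⟩
    · rintro X X' Y Y' hX hY ω (h | ⟨r, φ, hsol, h0, s, hs, hm⟩)
      · exact Or.inl fun r φ hsol h0 s hs => hY (h r φ hsol h0 s hs)
      · exact Or.inr ⟨r, φ, hsol, h0, s, hs, hX hm.1, hY hm.2⟩
  | test Q =>
    constructor
    · rintro X X' Y Y' hX hY ω ⟨hq, hx⟩; exact ⟨hq, hX hx⟩
    · rintro X X' Y Y' hX hY ω (h | h); exacts [Or.inl h, Or.inr (hY h)]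
  | choice a b iha ihb =>
    constructor
    · rintro X X' Y Y' hX hY ω (h | h)
      exacts [Or.inl (iha.1 X X' Y Y' hX hY h), Or.inr (ihb.1 X X' Y Y' hX hY h)]
    · rintro X X' Y Y' hX hY ω ((h | h) | h)
      · exact Or.inl (Or.inl ⟨iha.2 X X' Y Y' hX hY h.1, ihb.2 X X' Y Y' hX hY h.2⟩)
      · exact Or.inl (Or.inr ⟨iha.2 X X' Y Y' hX hY h.1, iha.1 X X' Y Y' hX hY h.2⟩)
      · exact Or.inr ⟨ihb.2 X X' Y Y' hX hY h.1, ihb.1 X X' Y Y' hX hY h.2⟩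
  | seq a b iha ihb =>
    constructor
    · intro X X' Y Y' hX hY
      exact iha.1 _ _ _ _ (ihb.1 X X' Y Y' hX hY) (ihb.2 X X' Y Y' hX hY)
    · intro X X' Y Y' hX hY
      exact iha.2 _ _ _ _ (ihb.1 X X' Y Y' hX hY) (ihb.2 X X' Y Y' hX hY)
  | dual a iha =>
    exact ⟨fun X X' Y Y' hX hY => iha.2 Y Y' X X' hY hX,
           fun X X' Y Y' hX hY => iha.1 Y Y' X X' hY hX⟩
  | star a iha =>
    constructor
    · intro X X' Y Y' hX hY
      apply union_subset_union
      · exact sInter_subset_sInter fun Z hZ => (union_subset_union_left _ hX).trans hZ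
      · exact sInter_subset_sInter fun Z hZ =>
          (union_subset_union_left _ (inter_subset_inter hX hY)).trans hZ
    · intro X X' Y Y' hX hY
      apply union_subset_union
      · exact sUnion_subset_sUnion fun Z hZ => hZ.trans (inter_subset_inter_left _ hY)
      · exact sInter_subset_sInter fun Z hZ =>
          (union_subset_union_left _ (inter_subset_inter hX hY)).trans hZ

lemma IsSolution.trunc {x : V} {f : (V → ℝ) → ℝ} {Q : Set (V → ℝ)} {r : ℝ}
    {φ : ℝ → (V → ℝ)} (h : IsSolution x f Q r φ) {s : ℝ} (hs : s ∈ Set.Icc (0:ℝ) r) :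
    IsSolution x f Q s φ := by
  obtain ⟨hr, h1, h2, h3⟩ := h
  exact ⟨hs.1, fun t ht => h1 t ⟨ht.1, ht.2.trans hs.2⟩,
    fun t ht => h2 t ⟨ht.1, ht.2.trans hs.2⟩,
    fun t ht => h3 t ⟨ht.1, ht.2.trans hs.2⟩⟩

/-- `tie_eq`: from the cross property, the tie region depends only on `X ∩ Y`. -/
lemma tie_eq (g : Game V)
    (hcross : ∀ X Y X' Y' : Set (V → ℝ), angel g X Y ∩ demon g X' Y' ⊆
      angel g ((X ∩ Y) ∪ (X ∩ Y') ∪ (X' ∩ Y')) ((X ∩ Y) ∪ (X ∩ Y') ∪ (X' ∩ Y')) ∩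
      demon g ((X ∩ Y) ∪ (X ∩ Y') ∪ (X' ∩ Y')) ((X ∩ Y) ∪ (X ∩ Y') ∪ (X' ∩ Y')))
    (X Y : Set (V → ℝ)) :
    angel g X Y ∩ demon g X Y =
      angel g (X ∩ Y) (X ∩ Y) ∩ demon g (X ∩ Y) (X ∩ Y) := by
  apply Subset.antisymm
  · have h := hcross X Y X Y
    simpa only [union_self] using h
  · exact inter_subset_inter
      ((mono g).1 _ _ _ _ inter_subset_left inter_subset_right)
      ((mono g).2 _ _ _ _ inter_subset_left inter_subset_right)

theorem ccx (g : Game V) :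
    (∀ X Y Y' : Set (V → ℝ), X ∩ Y = X ∩ Y' → angel g X Y = angel g X Y') ∧
    (∀ X X' Y : Set (V → ℝ), X ∩ Y = X' ∩ Y → demon g X Y = demon g X' Y) ∧
    (∀ X Y X' Y' : Set (V → ℝ), angel g X Y ∩ demon g X' Y' ⊆
      angel g ((X ∩ Y) ∪ (X ∩ Y') ∪ (X' ∩ Y')) ((X ∩ Y) ∪ (X ∩ Y') ∪ (X' ∩ Y')) ∩
      demon g ((X ∩ Y) ∪ (X ∩ Y') ∪ (X' ∩ Y')) ((X ∩ Y) ∪ (X ∩ Y') ∪ (X' ∩ Y'))) := by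
  induction g with
  | assign x e =>
    refine ⟨fun _ _ _ _ => rfl, fun _ _ _ _ => rfl, ?_⟩
    rintro X Y X' Y' ω ⟨h1, h2⟩
    have hK : Function.update ω x (e ω) ∈ (X ∩ Y) ∪ (X ∩ Y') ∪ (X' ∩ Y') :=
      Or.inl (Or.inr ⟨h1, h2⟩)
    exact ⟨hK, hK⟩
  | ode x f Q =>
    refine ⟨fun _ _ _ _ => rfl, ?_, ?_⟩
    · intro X X' Y h
      simp only [demon]
      rw [h]
    · rintro X Y X' Y' ω ⟨ha, hd⟩
      have hK : ∃ r φ, IsSolution x f Q r φ ∧ φ 0 = ω ∧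
          φ r ∈ (X ∩ Y) ∪ (X ∩ Y') ∪ (X' ∩ Y') := by
        rcases hd with hd | ⟨r, φ, hsol, h0, s, hs, hm⟩
        · obtain ⟨r, φ, hsol, h0, hrX⟩ := ha
          exact ⟨r, φ, hsol, h0, Or.inl (Or.inr ⟨hrX, hd r φ hsol h0 r ⟨hsol.1, le_rfl⟩⟩)⟩
        · exact ⟨s, φ, hsol.trunc hs, h0, Or.inr hm⟩
      obtain ⟨r, φ, hsol, h0, hr⟩ := hK
      exact ⟨⟨r, φ, hsol, h0, hr⟩,
        Or.inr ⟨r, φ, hsol, h0, r, ⟨hsol.1, le_rfl⟩, hr, hr⟩⟩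
  | test Q =>
    refine ⟨fun _ _ _ _ => rfl, fun _ _ _ _ => rfl, ?_⟩
    rintro X Y X' Y' ω ⟨⟨hq, hx⟩, hd⟩
    have hy' : ω ∈ Y' := hd.resolve_left (fun h => h hq)
    have hK : ω ∈ (X ∩ Y) ∪ (X ∩ Y') ∪ (X' ∩ Y') := Or.inl (Or.inr ⟨hx, hy'⟩)
    exact ⟨⟨hq, hK⟩, Or.inr hK⟩
  | choice a b iha ihb =>
    obtain ⟨Aa, Da, Ca⟩ := iha
    obtain ⟨Ab, Db, Cb⟩ := ihb
    refine ⟨?_, ?_, ?_⟩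
    · intro X Y Y' h
      simp only [angel]
      rw [Aa X Y Y' h, Ab X Y Y' h]
    · intro X X' Y h
      simp only [demon]
      have e2 : demon a X Y ∩ angel a X Y = demon a X' Y ∩ angel a X' Y := by
        rw [inter_comm, tie_eq a Ca X Y, h, ← tie_eq a Ca X' Y, inter_comm]
      have e3 : demon b X Y ∩ angel b X Y = demon b X' Y ∩ angel b X' Y := by
        rw [inter_comm, tie_eq b Cb X Y, h, ← tie_eq b Cb X' Y, inter_comm]
      rw [e2, e3, Da X X' Y h, Db X X' Y h]
    · intro X Y X' Y'
      set K := (X ∩ Y) ∪ (X ∩ Y') ∪ (X' ∩ Y') with hKdef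
      have hK2 : X ∩ Y' ⊆ K := fun z hz => Or.inl (Or.inr hz)
      have hK3 : X' ∩ Y' ⊆ K := fun z hz => Or.inr hz
      have ta : ∀ S S' : Set (V → ℝ), S ⊆ S' →
          angel a S S ∩ demon a S S ⊆ angel a S' S' ∩ demon a S' S' :=
        fun S S' h => inter_subset_inter ((mono a).1 _ _ _ _ h h) ((mono a).2 _ _ _ _ h h)
      have tb : ∀ S S' : Set (V → ℝ), S ⊆ S' →
          angel b S S ∩ demon b S S ⊆ angel b S' S' ∩ demon b S' S' :=
        fun S S' h => inter_subset_inter ((mono b).1 _ _ _ _ h h) ((mono b).2 _ _ _ _ h h)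
      have emba : angel a K K ∩ demon a K K ⊆
          angel (Game.choice a b) K K ∩ demon (Game.choice a b) K K := by
        rintro ω ⟨h1, h2⟩; exact ⟨Or.inl h1, Or.inl (Or.inr ⟨h2, h1⟩)⟩
      have embb : angel b K K ∩ demon b K K ⊆
          angel (Game.choice a b) K K ∩ demon (Game.choice a b) K K := by
        rintro ω ⟨h1, h2⟩; exact ⟨Or.inr h1, Or.inr ⟨h2, h1⟩⟩
      have tiea' : angel a X' Y' ∩ demon a X' Y' ⊆ angel a K K ∩ demon a K K :=
        (tie_eq a Ca X' Y').subset.trans (ta _ _ hK3)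
      have tieb' : angel b X' Y' ∩ demon b X' Y' ⊆ angel b K K ∩ demon b K K :=
        (tie_eq b Cb X' Y').subset.trans (tb _ _ hK3)
      rintro ω ⟨hA, hD⟩
      rcases hA with ha | hb
      · rcases hD with (hd | hd) | hd
        · exact emba (Ca X Y X' Y' ⟨ha, hd.1⟩)
        · exact emba (Ca X Y X' Y' ⟨ha, hd.1⟩)
        · exact embb (tieb' ⟨hd.2, hd.1⟩)
      · rcases hD with (hd | hd) | hd
        · exact embb (Cb X Y X' Y' ⟨hb, hd.2⟩)
        · exact emba (tiea' ⟨hd.2, hd.1⟩)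
        · exact embb (Cb X Y X' Y' ⟨hb, hd.1⟩)
  | seq a b iha ihb =>
    obtain ⟨Aa, Da, Ca⟩ := iha
    obtain ⟨Ab, Db, Cb⟩ := ihb
    refine ⟨?_, ?_, ?_⟩
    · intro X Y Y' h
      simp only [angel]
      have e1 : angel b X Y = angel b X Y' := Ab X Y Y' h
      have e2 : angel b X Y ∩ demon b X Y = angel b X Y' ∩ demon b X Y' := by
        rw [tie_eq b Cb X Y, h, tie_eq b Cb X Y']
      rw [e1]
      exact Aa _ _ _ (by rw [← e1] at e2 ⊢; exact e2)
    · intro X X' Y h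
      simp only [demon]
      have e1 : demon b X Y = demon b X' Y := Db X X' Y h
      have e2 : angel b X Y ∩ demon b X Y = angel b X' Y ∩ demon b X' Y := by
        rw [tie_eq b Cb X Y, h, tie_eq b Cb X' Y]
      rw [e1]
      exact Da _ _ _ (by rw [← e1] at e2 ⊢; exact e2)
    · intro X Y X' Y'
      set K := (X ∩ Y) ∪ (X ∩ Y') ∪ (X' ∩ Y') with hKdef
      have hK1 : X ∩ Y ⊆ K := fun z hz => Or.inl (Or.inl hz)
      have hK3 : X' ∩ Y' ⊆ K := fun z hz => Or.inr hz
      have tb : ∀ S S' : Set (V → ℝ), S ⊆ S' →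
          angel b S S ∩ demon b S S ⊆ angel b S' S' ∩ demon b S' S' :=
        fun S S' h => inter_subset_inter ((mono b).1 _ _ _ _ h h) ((mono b).2 _ _ _ _ h h)
      have hKa : (angel b X Y ∩ demon b X Y) ∪
            (angel b X Y ∩ demon b X' Y') ∪ (angel b X' Y' ∩ demon b X' Y') ⊆
          angel b K K ∩ demon b K K := by
        refine union_subset (union_subset ?_ ?_) ?_
        · exact (tie_eq b Cb X Y).subset.trans (tb _ _ hK1)
        · exact Cb X Y X' Y'
        · exact (tie_eq b Cb X' Y').subset.trans (tb _ _ hK3)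
      have h1 : (angel b X Y ∩ demon b X Y) ∪
            (angel b X Y ∩ demon b X' Y') ∪ (angel b X' Y' ∩ demon b X' Y') ⊆
          angel b K K := hKa.trans inter_subset_left
      have h2 : (angel b X Y ∩ demon b X Y) ∪
            (angel b X Y ∩ demon b X' Y') ∪ (angel b X' Y' ∩ demon b X' Y') ⊆
          demon b K K := hKa.trans inter_subset_right
      exact (Ca _ _ _ _).trans
        (inter_subset_inter ((mono a).1 _ _ _ _ h1 h2) ((mono a).2 _ _ _ _ h1 h2))
  | dual a iha =>
    obtain ⟨Aa, Da, Ca⟩ := iha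
    refine ⟨?_, ?_, ?_⟩
    · intro X Y Y' h
      exact Da Y Y' X (by rw [inter_comm Y X, inter_comm Y' X]; exact h)
    · intro X X' Y h
      exact Aa Y X X' (by rw [inter_comm Y X, inter_comm Y X']; exact h)
    · intro X Y X' Y'
      set K := (X ∩ Y) ∪ (X ∩ Y') ∪ (X' ∩ Y') with hKdef
      have hK2 : (Y' ∩ X') ∪ (Y' ∩ X) ∪ (Y ∩ X) ⊆ K := by
        rintro z ((hz | hz) | hz)
        · exact Or.inr ⟨hz.2, hz.1⟩
        · exact Or.inl (Or.inr ⟨hz.2, hz.1⟩)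
        · exact Or.inl (Or.inl ⟨hz.2, hz.1⟩)
      rintro ω ⟨h1, h2⟩
      have h3 := Ca Y' X' Y X ⟨h2, h1⟩
      have h4 := inter_subset_inter ((mono a).1 _ _ _ _ hK2 hK2)
        ((mono a).2 _ _ _ _ hK2 hK2) h3
      exact ⟨h4.2, h4.1⟩
  | star a iha =>
    obtain ⟨Aa, Da, Ca⟩ := iha
    refine ⟨?_, ?_, ?_⟩
    · intro X Y Y' h
      simp only [angel]
      rw [h]
    · intro X X' Y h
      simp only [demon]
      rw [h]
    · intro X Y X' Y'
      have hK1 : X ∩ Y ⊆ (X ∩ Y) ∪ (X ∩ Y') ∪ (X' ∩ Y') := fun z hz => Or.inl (Or.inl hz)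
      have hK2 : X ∩ Y' ⊆ (X ∩ Y) ∪ (X ∩ Y') ∪ (X' ∩ Y') := fun z hz => Or.inl (Or.inr hz)
      have hK3 : X' ∩ Y' ⊆ (X ∩ Y) ∪ (X ∩ Y') ∪ (X' ∩ Y') := fun z hz => Or.inr hz
      have ta : ∀ S S' : Set (V → ℝ), S ⊆ S' →
          angel a S S ∩ demon a S S ⊆ angel a S' S' ∩ demon a S' S' :=
        fun S S' h => inter_subset_inter ((mono a).1 _ _ _ _ h h) ((mono a).2 _ _ _ _ h h)
      have Bmono : ∀ S S' : Set (V → ℝ), S ⊆ S' →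
          ⋂₀ {Z | S ∪ (angel a Z Z ∩ demon a Z Z) ⊆ Z} ⊆
          ⋂₀ {Z | S' ∪ (angel a Z Z ∩ demon a Z Z) ⊆ Z} :=
        fun S S' h => sInter_subset_sInter fun Z hZ => (union_subset_union_left _ h).trans hZ
      set B := ⋂₀ {Z | (X ∩ Y') ∪ (angel a Z Z ∩ demon a Z Z) ⊆ Z} with hBdef
      set C := ⋃₀ {Z | Z ⊆ Y' ∩ demon a Zᶜ Z} with hCdef
      have BS : X ∩ Y' ⊆ B := subset_sInter fun Z hZ => subset_union_left.trans hZ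
      have Bpre : angel a B B ∩ demon a B B ⊆ B :=
        subset_sInter fun Z hZ =>
          (ta B Z (sInter_subset_of_mem hZ)).trans (subset_union_right.trans hZ)
      have hCY : C ⊆ Y' := sUnion_subset fun Z hZ => hZ.trans inter_subset_left
      have hCD : C ⊆ demon a ∅ C := sUnion_subset fun Z hZ => by
        have h2 : demon a Zᶜ Z = demon a ∅ Z := Da Zᶜ ∅ Z (by simp)
        have h4 : Z ⊆ demon a Zᶜ Z := hZ.trans inter_subset_right
        rw [h2] at h4
        exact h4.trans ((mono a).2 ∅ ∅ Z C (subset_refl _) (subset_sUnion_of_mem hZ))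
      have hW : X ∪ angel a (Cᶜ ∪ B) (Cᶜ ∪ B)ᶜ ⊆ Cᶜ ∪ B := by
        apply union_subset
        · intro ω hx
          by_cases hc : ω ∈ C
          · exact Or.inr (BS ⟨hx, hCY hc⟩)
          · exact Or.inl hc
        · intro ω hω
          by_cases hc : ω ∈ C
          · refine Or.inr ?_
            have h5 := Ca (Cᶜ ∪ B) (Cᶜ ∪ B)ᶜ ∅ C ⟨hω, hCD hc⟩
            have hsub : ((Cᶜ ∪ B) ∩ (Cᶜ ∪ B)ᶜ) ∪ ((Cᶜ ∪ B) ∩ C) ∪ (∅ ∩ C) ⊆ B := by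
              rintro z ((hz | hz) | hz)
              · exact absurd hz.1 hz.2
              · rcases hz.1 with h | h
                exacts [absurd hz.2 h, h]
              · exact absurd hz.1 (notMem_empty z)
            exact Bpre (ta _ _ hsub h5)
          · exact Or.inl hc
      have hAW : ⋂₀ {Z | X ∪ angel a Z Zᶜ ⊆ Z} ⊆ Cᶜ ∪ B :=
        sInter_subset_of_mem hW
      rintro ω ⟨h1, h2⟩
      have hB : ω ∈ ⋂₀ {Z | ((X ∩ Y) ∪ (X ∩ Y') ∪ (X' ∩ Y')) ∪
          (angel a Z Z ∩ demon a Z Z) ⊆ Z} := by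
        rcases h1 with h1 | h1
        · rcases h2 with h2 | h2
          · rcases hAW h1 with h | h
            · exact absurd h2 h
            · exact Bmono _ _ hK2 h
          · exact Bmono _ _ hK3 h2
        · exact Bmono _ _ hK1 h1
      simp only [angel, demon, inter_self]
      exact ⟨Or.inr hB, Or.inr hB⟩

/-- Goals-to-tests conversion for Angel:
`ς_α(X, Y) = ς_{α ; ?X ; (?Y)^d}(S, S) ∩ ς_{α ; (?Y)^d ; ?X}(S, S)`. -/
theorem goals_to_tests_angel (α : Game V) (X Y : Set (V → ℝ)) :
    angel α X Y =
      angel (.seq (.seq α (.test X)) (.dual (.test Y))) Set.univ Set.univ ∩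
      angel (.seq (.seq α (.dual (.test Y))) (.test X)) Set.univ Set.univ := by
  have e1 : angel (Game.seq (Game.seq α (Game.test X)) (Game.dual (Game.test Y)))
      Set.univ Set.univ = angel α X (Xᶜ ∪ Y) := by
    simp [angel, demon]
  have e2 : angel (Game.seq (Game.seq α (Game.dual (Game.test Y))) (Game.test X))
      Set.univ Set.univ = angel α (Yᶜ ∪ X) Y := by
    simp [angel, demon]
  rw [e1, e2, (ccx α).1 X (Xᶜ ∪ Y) Y (by rw [inter_union_distrib_left]; simp)]
  exact (inter_eq_self_of_subset_left
    ((mono α).1 X (Yᶜ ∪ X) Y Y subset_union_right (subset_refl Y))).symm
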